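/- For every stable tree T marked by X, the set ψ(T) = { P_v^X : v an internal vertex of T }, where P_v^X is the partition of X induced by the branches at v, is an admissible set of partitions of X: (1) every partition in ψ(T) has at least three blocks; (2) for every partition P in ψ(T) and every block B of P, either B is a singleton {x} with x ∈ X, or some partition in ψ(T) contains the block X − B; (3) any two distinct partitions in ψ(T) share no common block. -/

import Mathlib

open SimpleGraph

/-- The branch of a vertex `v` in the direction of a neighbor `u`. -/
def Branch {V : Type*} (G : SimpleGraph V) (v u : V) : Set V :=
  {w | ∃ p : G.Walk u w, v ∉ p.support}

/-- A stable combinatorial tree marked by `X`. -/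
structure MarkedStableTree (X V : Type*) (G : SimpleGraph V) (m : X → V) : Prop where
  tree : G.IsTree
  inj : Function.Injective m
  leaf_iff : ∀ v, (G.neighborSet v).ncard = 1 ↔ v ∈ Set.range m
  stable : ∀ v, v ∉ Set.range m → 3 ≤ (G.neighborSet v).ncard

/-- The partition `P_v^X` of `X` induced by the branches at a vertex `v`. -/
def blockPartition {X V : Type*} (G : SimpleGraph V) (m : X → V) (v : V) : Set (Set X) :=
  {B | ∃ u, G.Adj v u ∧ B = {x : X | m x ∈ Branch G v u}}

/-- `ψ(T)`: the set of partitions of `X` induced at the internal vertices of `T`. -/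
def psi {X V : Type*} (G : SimpleGraph V) (m : X → V) : Set (Set (Set X)) :=
  {P | ∃ v, v ∉ Set.range m ∧ P = blockPartition G m v}

/-- Admissibility of a set of partitions of `X`: each partition has at least three
blocks; each block is either a singleton or has its complement as a block of another
partition of the family; and distinct partitions share no block. -/
def Admissible {X : Type*} (Ps : Set (Set (Set X))) : Prop :=
  (∀ P ∈ Ps, 3 ≤ P.ncard) ∧
  (∀ P ∈ Ps, ∀ B ∈ P, (∃ x : X, B = {x}) ∨ ∃ P' ∈ Ps, Bᶜ ∈ P') ∧
  (∀ P ∈ Ps, ∀ P' ∈ Ps, P ≠ P' → P ∩ P' = ∅)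

/-!
Each block of `P_v^X` is the set of marks in a branch of `T` at `v`. Every branch of a finite tree
contains a leaf (the end of a longest path entering it from `v`), and the leaves are exactly the
marked vertices, so distinct branches at `v` carry disjoint nonempty sets of marks; hence `P_v^X`
has one block per neighbour of `v`. The complement of the branch at `v` towards `u` is the branch at
`u` towards `v`, so a block is either a single mark (when `u` is a leaf) or its complement is a
block at the internal vertex `u`. Finally, suppose branches at internal vertices `v ≠ v'` carried
the same marks. If one of them contains the other's base vertex, it also contains a whole branch
there, towards a third neighbour; if neither does, the branch at `v` lies in the branch at `v'`
towards `v`. Either way two distinct branches at one vertex would share a mark.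
-/

section Branch

variable {V : Type*} {G : SimpleGraph V} {v u w y : V}

lemma mem_branch_self (h : v ≠ u) : u ∈ Branch G v u :=
  ⟨Walk.nil, by simpa using h⟩

lemma mem_branch_of_adj (hw : w ∈ Branch G v u) (ha : G.Adj w y) (hy : y ≠ v) :
    y ∈ Branch G v u := by
  obtain ⟨p, hp⟩ := hw
  exact ⟨p.concat ha, by simp [Walk.support_concat, hp, Ne.symm hy]⟩

lemma mem_branch_of_mem_support {p : G.Walk u w} (hp : v ∉ p.support) (hy : y ∈ p.support) :
    y ∈ Branch G v u := by
  classical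
  exact ⟨p.takeUntil y hy, fun hv => hp (p.support_takeUntil_subset_support hy hv)⟩

lemma branch_subset_branch {v' u' : V} (hv' : v' ∈ Branch G v u) (ha : G.Adj v' u')
    (hv : v ∉ Branch G v' u') : Branch G v' u' ⊆ Branch G v u := by
  rintro w ⟨q, hq⟩
  obtain ⟨p, hp⟩ := mem_branch_of_adj hv' ha (by rintro rfl; exact hv (mem_branch_self ha.ne))
  have hvq : v ∉ q.support := fun hvq => hv (mem_branch_of_mem_support hq hvq)
  exact ⟨p.append q, by simp [Walk.mem_support_append_iff, hp, hvq]⟩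

lemma branch_eq_singleton_of_ncard_neighborSet_eq_one (h : G.Adj v w)
    (hw : (G.neighborSet w).ncard = 1) : Branch G v w = {w} := by
  obtain ⟨a, ha⟩ := Set.ncard_eq_one.1 hw
  have hnbr : ∀ z, G.Adj w z → z = v :=
    fun z hz => Eq.trans (ha.subset hz) (ha.subset h.symm).symm
  refine Set.eq_singleton_iff_unique_mem.2 ⟨mem_branch_self h.ne, ?_⟩
  rintro y ⟨_ | ⟨hz, r⟩, hp⟩
  · rfl
  · exact absurd (List.mem_cons_of_mem _ (hnbr _ hz ▸ r.start_mem_support)) hp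

lemma SimpleGraph.Connected.exists_adj_mem_branch (hG : G.Connected) (hw : w ≠ v) :
    ∃ u, G.Adj v u ∧ w ∈ Branch G v u := by
  obtain ⟨p, hp⟩ := hG.exists_isPath v w
  cases p with
  | nil => exact absurd rfl hw
  | cons ha p => exact ⟨_, ha, p, ((Walk.cons_isPath_iff _ _).1 hp).2⟩

lemma SimpleGraph.IsAcyclic.disjoint_branch (hG : G.IsAcyclic) {u₁ u₂ : V} (h₁ : G.Adj v u₁)
    (h₂ : G.Adj v u₂) (hne : u₁ ≠ u₂) : Disjoint (Branch G v u₁) (Branch G v u₂) := by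
  classical
  refine Set.disjoint_left.2 fun w ⟨p, hp⟩ ⟨q, hq⟩ => ?_
  let r := (p.append q.reverse).bypass
  have hr : v ∉ r.support := fun hv => by
    simpa [Walk.mem_support_append_iff, hp, hq] using
      (p.append q.reverse).support_bypass_subset_support hv
  have hpath : (Walk.cons h₁.symm (Walk.cons h₂ Walk.nil)).IsPath := by
    simp [Walk.isPath_def, h₁.ne', h₂.ne, hne]
  have heq := congrArg Subtype.val
    ((hG.subsingleton_path u₁ u₂).elim ⟨r, Walk.bypass_isPath _⟩ ⟨_, hpath⟩)
  simp only at heq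
  simp [heq] at hr

lemma SimpleGraph.IsTree.compl_branch (hG : G.IsTree) (h : G.Adj v u) :
    (Branch G v u)ᶜ = Branch G u v := by
  classical
  ext w
  constructor
  · intro hw
    obtain ⟨p, hp⟩ := hG.connected.exists_isPath w v
    obtain ⟨q, hq⟩ := hG.connected.exists_isPath w u
    have hvq : v ∈ q.support := by
      by_contra hvq
      exact hw ⟨q.reverse, by simpa using hvq⟩
    have hup := hG.isAcyclic.ne_mem_support_of_support_of_adj_of_isPath hq hp h.symm hvq
    exact ⟨p.reverse, by simpa using hup⟩
  · rintro ⟨r, hr⟩ ⟨s, hs⟩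
    have hv := hG.isAcyclic.mem_support_of_ne_mem_support_of_adj_of_isPath
      s.reverse.bypass_isPath r.reverse.bypass_isPath h.symm
      fun hu => hr (by simpa using r.reverse.support_bypass_subset_support hu)
    exact hs (by simpa using s.reverse.support_bypass_subset_support hv)

lemma SimpleGraph.IsAcyclic.exists_mem_branch_ncard_neighborSet_le_one [Finite V]
    (hG : G.IsAcyclic) (h : G.Adj v u) :
    ∃ w ∈ Branch G v u, (G.neighborSet w).ncard ≤ 1 := by
  classical
  have := Fintype.ofFinite V
  let lengths := {n | ∃ w, ∃ q : G.Walk u w, (Walk.cons h q).IsPath ∧ q.length = n}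
  have hfin : lengths.Finite := (Set.finite_lt_nat (Fintype.card V)).subset
    fun n ⟨_, q, hq, hn⟩ => hn ▸ (Nat.lt_succ_self _).trans hq.length_lt
  obtain ⟨_, ⟨w, q, hq, rfl⟩, hmax⟩ := hfin.exists_maximal ⟨0, u, Walk.nil, by simp [h.ne], rfl⟩
  refine ⟨w, ⟨q, ((Walk.cons_isPath_iff _ _).1 hq).2⟩, ?_⟩
  by_contra! hdeg
  -- a neighbour of `w` other than its predecessor on `cons h q` would extend this longest path
  obtain ⟨y, hy : G.Adj w y, hyne⟩ :=
    Set.exists_ne_of_one_lt_ncard hdeg (Walk.cons h q).penultimate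
  have hys : y ∉ (Walk.cons h q).support :=
    fun hys => hyne (hG.eq_penultimate_of_adj_end hq hy hys)
  have hlong : (Walk.cons h (q.concat hy)).IsPath := by
    rw [← Walk.concat_cons]
    exact hq.concat hys hy
  have := hmax ⟨y, q.concat hy, hlong, rfl⟩ (by simp)
  simp at this

end Branch

namespace MarkedStableTree

variable {X V : Type*} {G : SimpleGraph V} {m : X → V} {v u v' u' : V}

lemma exists_mem_branch [Finite V] (hT : MarkedStableTree X V G m) (h : G.Adj v u) :
    ∃ x, m x ∈ Branch G v u := by
  obtain ⟨w, hw, hdeg⟩ := hT.tree.isAcyclic.exists_mem_branch_ncard_neighborSet_le_one h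
  obtain ⟨x, rfl⟩ : w ∈ Set.range m := by
    by_contra hw'
    have := hT.stable w hw'
    omega
  exact ⟨x, hw⟩

lemma preimage_branch_not_subset [Finite V] (hT : MarkedStableTree X V G m) (hu : G.Adj v u)
    (hu' : G.Adj v u') (hne : u ≠ u') : ¬ m ⁻¹' Branch G v u ⊆ m ⁻¹' Branch G v u' :=
  fun hsub => let ⟨_, hx⟩ := hT.exists_mem_branch hu
  Set.disjoint_left.1 (hT.tree.isAcyclic.disjoint_branch hu hu' hne) hx (hsub hx)

lemma ncard_blockPartition [Finite V] (hT : MarkedStableTree X V G m) (v : V) :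
    (blockPartition G m v).ncard = (G.neighborSet v).ncard := by
  have himage : blockPartition G m v = (fun u => m ⁻¹' Branch G v u) '' G.neighborSet v := by
    ext B
    exact ⟨fun ⟨u, hu, hB⟩ => ⟨u, hu, hB.symm⟩, fun ⟨u, hu, hB⟩ => ⟨u, hu, hB.symm⟩⟩
  rw [himage, Set.InjOn.ncard_image]
  intro u hu u' hu' heq
  by_contra hne
  exact hT.preimage_branch_not_subset hu hu' hne heq.le

lemma preimage_branch_eq_singleton (hT : MarkedStableTree X V G m) {x : X} (h : G.Adj v (m x)) :
    m ⁻¹' Branch G v (m x) = {x} := by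
  rw [branch_eq_singleton_of_ncard_neighborSet_eq_one h ((hT.leaf_iff _).2 ⟨x, rfl⟩),
    ← Set.image_singleton, hT.inj.preimage_image]

lemma compl_preimage_branch (hT : MarkedStableTree X V G m) (h : G.Adj v u) :
    (m ⁻¹' Branch G v u)ᶜ = m ⁻¹' Branch G u v := by
  rw [← Set.preimage_compl, hT.tree.compl_branch h]

lemma preimage_branch_ne_of_mem_branch [Finite V] (hT : MarkedStableTree X V G m)
    (hv' : v' ∉ Set.range m) (hu' : G.Adj v' u') (hne : v ≠ v')
    (hv'B : v' ∈ Branch G v u) : m ⁻¹' Branch G v u ≠ m ⁻¹' Branch G v' u' := by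
  intro hB
  obtain ⟨a', ha', hva'⟩ := hT.tree.connected.exists_adj_mem_branch hne
  have hthree : ({u', a'} : Set V).ncard < (G.neighborSet v').ncard :=
    (Set.ncard_insert_le u' {a'}).trans_lt (by rw [Set.ncard_singleton]; exact hT.stable v' hv')
  obtain ⟨b', hb' : G.Adj v' b', hb'u'a'⟩ := Set.exists_mem_notMem_of_ncard_lt_ncard hthree
  simp only [Set.mem_insert_iff, Set.mem_singleton_iff, not_or] at hb'u'a'
  -- the branch at `v'` towards a third neighbour `b'` avoids `v`, so it lies in `Branch G v u`
  have hvb' : v ∉ Branch G v' b' :=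
    fun hv => Set.disjoint_left.1 (hT.tree.isAcyclic.disjoint_branch hb' ha' hb'u'a'.2) hv hva'
  exact hT.preimage_branch_not_subset hb' hu' hb'u'a'.1
    ((Set.preimage_mono (branch_subset_branch hv'B hb' hvb')).trans hB.subset)

lemma disjoint_blockPartition [Finite V] (hT : MarkedStableTree X V G m) (hv : v ∉ Set.range m)
    (hv' : v' ∉ Set.range m) (hne : v ≠ v') :
    Disjoint (blockPartition G m v) (blockPartition G m v') := by
  refine Set.disjoint_left.2 ?_
  rintro _ ⟨u, hu, rfl⟩ ⟨u', hu', hB⟩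
  by_cases hv'B : v' ∈ Branch G v u
  · exact hT.preimage_branch_ne_of_mem_branch hv' hu' hne hv'B hB
  by_cases hvB : v ∈ Branch G v' u'
  · exact hT.preimage_branch_ne_of_mem_branch hv hu hne.symm hvB hB.symm
  -- now `Branch G v u` lies in the branch at `v'` towards `v`, not the one towards `u'`
  obtain ⟨a', ha', hva'⟩ := hT.tree.connected.exists_adj_mem_branch hne
  exact hT.preimage_branch_not_subset hu' ha' (by rintro rfl; exact hvB hva')
    (hB.symm.subset.trans (Set.preimage_mono (branch_subset_branch hva' hu hv'B)))

end MarkedStableTree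

theorem psi_admissible_general {X V : Type*} [Finite V]
    (G : SimpleGraph V) (m : X → V) (h : MarkedStableTree X V G m) :
    Admissible (psi G m) := by
  refine ⟨?_, ?_, ?_⟩
  · rintro _ ⟨v, hv, rfl⟩
    exact h.ncard_blockPartition v ▸ h.stable v hv
  · rintro _ ⟨v, hv, rfl⟩ _ ⟨u, hu, rfl⟩
    by_cases hum : u ∈ Set.range m
    · obtain ⟨x, rfl⟩ := hum
      exact Or.inl ⟨x, h.preimage_branch_eq_singleton hu⟩
    · exact Or.inr ⟨_, ⟨u, hum, rfl⟩, v, hu.symm, h.compl_preimage_branch hu⟩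
  · rintro _ ⟨v, hv, rfl⟩ _ ⟨v', hv', rfl⟩ hne
    exact Set.disjoint_iff_inter_eq_empty.1
      (h.disjoint_blockPartition hv hv' (ne_of_apply_ne (blockPartition G m) hne))

/-- for every stable tree `T` marked by `X`, the set `ψ(T)` of branch
partitions at internal vertices is an admissible set of partitions of `X`. -/
theorem psi_admissible {X V : Type*} [Finite X] [Finite V]
    (G : SimpleGraph V) (m : X → V) (h : MarkedStableTree X V G m)
    (hX : 3 ≤ Nat.card X) :
    Admissible (psi G m) :=
  psi_admissible_general G m h
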